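/- Let s > 0 and let f : ℝ^d → [0,∞) be an upper semi-continuous 1/s-concave function with finite integral. Then the function z ↦ ∫_{ℝ^d} L_s(f(·+z)) is convex on the interior of the support of f. -/

import Mathlib

open MeasureTheory Set

variable {d : ℕ}

/-- The `s`-polar transform. -/
noncomputable def sPolar (s : ℝ) (f : EuclideanSpace ℝ (Fin d) → ℝ)
    (y : EuclideanSpace ℝ (Fin d)) : ℝ :=
  ⨅ x : {x : EuclideanSpace ℝ (Fin d) // 0 < f x},
    max (1 - (inner ℝ (x : EuclideanSpace ℝ (Fin d)) y : ℝ)) 0 ^ s / f x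

/-!
The projective map `w ↦ w / (1 - ⟪z, w⟫)` intertwines translation by `z` with the polar
transform: at the image of `w`, `L_s (f (· + z))` is `|1 - ⟪z, w⟫|⁻ˢ` times `L_s f w` when
`⟪z, w⟫ < 1`, and times the infimum of `(⟪x, w⟫ - 1)₊ˢ / f x` when `⟪z, w⟫ > 1`; its Jacobian is
`|1 - ⟪z, w⟫|^(-(d + 1))`. Changing variables therefore writes `∫ L_s (f (· + z))` as the
integral of a density in which `z` only enters through `(±(1 - ⟪z, w⟫))^(-(d + 1 + s))`.
Whenever the coefficient of such a term is nonzero, the sign of `1 - ⟪z, w⟫` is the same for all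
`z` in the support of `f`, which is convex by `1/s`-concavity; since `t ↦ t^(-(d + 1 + s))` is
convex on `(0, ∞)`, the density, and hence its integral, is convex in `z` there.
-/

open scoped RealInnerProductSpace

theorem convexOn_integral {α F : Type*} [MeasurableSpace α] {μ : Measure α} [AddCommGroup F]
    [Module ℝ F] {D : Set F} {G : F → α → ℝ} (hD : Convex ℝ D) (hG : ∀ a, ConvexOn ℝ D (G · a))
    (hG_int : ∀ z ∈ D, Integrable (G z) μ) : ConvexOn ℝ D fun z => ∫ a, G z a ∂μ := by
  refine ⟨hD, fun x hx y hy a b ha hb hab => ?_⟩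
  have hx_int := (hG_int x hx).const_mul a
  have hy_int := (hG_int y hy).const_mul b
  calc ∫ t, G (a • x + b • y) t ∂μ ≤ ∫ t, a * G x t + b * G y t ∂μ :=
        integral_mono (hG_int _ (hD hx hy ha hb hab)) (hx_int.add hy_int)
          fun t => (hG t).2 hx hy ha hb hab
    _ = a • ∫ t, G x t ∂μ + b • ∫ t, G y t ∂μ := by
        rw [integral_add hx_int hy_int, integral_const_mul, integral_const_mul, smul_eq_mul,
          smul_eq_mul]

theorem convexOn_inv_rpow {p : ℝ} (hp : 1 ≤ p) : ConvexOn ℝ (Ioi 0) fun t : ℝ => t⁻¹ ^ p := by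
  have h_image : Inv.inv '' Ioi (0 : ℝ) = Ioi 0 := by ext t; simp
  have h_inv : ConvexOn ℝ (Ioi 0) fun t : ℝ => t⁻¹ := by simpa using convexOn_zpow (𝕜 := ℝ) (-1)
  refine ConvexOn.comp (g := fun t : ℝ => t ^ p) ?_ h_inv ?_
  · rw [h_image]
    exact (convexOn_rpow hp).subset Ioi_subset_Ici_self (convex_Ioi 0)
  · rw [h_image]
    exact fun x hx y _ hxy => Real.rpow_le_rpow (le_of_lt hx) hxy (by linarith)

theorem convexOn_ite_mul_inv_rpow {F : Type*} [AddCommGroup F] [Module ℝ F] {D : Set F}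
    (hD : Convex ℝ D) (ℓ : F →ᵃ[ℝ] ℝ) {K p : ℝ} (hK : 0 ≤ K) (hp : 1 ≤ p)
    (hℓ : 0 < K → ∀ z ∈ D, 0 < ℓ z) :
    ConvexOn ℝ D fun z => if 0 < ℓ z then K * (ℓ z)⁻¹ ^ p else 0 := by
  rcases hK.eq_or_lt with rfl | hK
  · simpa using convexOn_const (0 : ℝ) hD
  · have h := ((convexOn_inv_rpow hp).smul hK.le).comp_affineMap ℓ
    refine (h.subset (fun z hz => hℓ hK z hz) hD).congr fun z hz => ?_
    simp [hℓ hK z hz]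

theorem iInf_max_mul_rpow_div {ι : Sort*} {t : ℝ} (ht : 0 ≤ t) (s : ℝ) (a b : ι → ℝ) :
    ⨅ i, max (t * a i) 0 ^ s / b i = t ^ s * ⨅ i, max (a i) 0 ^ s / b i := by
  rw [Real.mul_iInf_of_nonneg (Real.rpow_nonneg ht s)]
  congr 1 with i
  rw [← mul_zero t, ← mul_max_of_nonneg _ _ ht, Real.mul_rpow ht (le_max_right _ _),
    mul_zero, mul_div_assoc]

theorem LinearMap.det_id_add_smulRight {K V : Type*} [Field K] [AddCommGroup V] [Module K V]
    [FiniteDimensional K V] (φ : V →ₗ[K] K) (w : V) :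
    (LinearMap.id + φ.smulRight w).det = 1 + φ w := by
  classical
  set b := Module.finBasis K V
  rw [← LinearMap.det_toMatrix b]
  have : LinearMap.toMatrix b b (LinearMap.id + φ.smulRight w)
      = 1 + Matrix.replicateCol Unit (b.repr w) * Matrix.replicateRow Unit (fun j => φ (b j)) := by
    ext i j
    simp [LinearMap.toMatrix_apply, Matrix.one_apply, Matrix.mul_apply, Finsupp.single_apply,
      eq_comm, mul_comm]
  rw [this, Matrix.det_one_add_replicateCol_mul_replicateRow, dotProduct]
  congr 1
  conv_rhs => rw [← b.sum_repr w, map_sum]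
  simp [mul_comm]

theorem addHaar_setOf_inner_eq {V : Type*} [NormedAddCommGroup V] [InnerProductSpace ℝ V]
    [FiniteDimensional ℝ V] [MeasurableSpace V] [BorelSpace V] (μ : Measure V)
    [μ.IsAddHaarMeasure] (v : V) {c : ℝ} (hc : c ≠ 0) : μ {y | ⟪v, y⟫ = c} = 0 := by
  let H : AffineSubspace ℝ V :=
    { carrier := {y | ⟪v, y⟫ = c}
      smul_vsub_vadd_mem' := fun t p₁ p₂ p₃ h₁ h₂ h₃ => by
        simp_all [inner_add_right, inner_smul_right, inner_sub_right] }
  refine Measure.addHaar_affineSubspace μ H fun hH => hc ?_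
  have h0 : (0 : V) ∈ H := hH ▸ AffineSubspace.mem_top ℝ V 0
  change ⟪v, 0⟫ = c at h0
  simpa [eq_comm] using h0

local notation "E" => EuclideanSpace ℝ (Fin d)

theorem sPolar_nonneg (s : ℝ) (f : E → ℝ) (y : E) : 0 ≤ sPolar s f y :=
  Real.iInf_nonneg fun x => div_nonneg (Real.rpow_nonneg (le_max_right _ _) s) x.2.le

theorem bddBelow_range_sPolar (s : ℝ) (f : E → ℝ) (y : E) :
    BddBelow (range fun x : {x : E // 0 < f x} => max (1 - ⟪(x : E), y⟫) 0 ^ s / f x) :=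
  ⟨0, forall_mem_range.2 fun x => div_nonneg (Real.rpow_nonneg (le_max_right _ _) s) x.2.le⟩

theorem upperSemicontinuous_sPolar {s : ℝ} (hs : 0 ≤ s) (f : E → ℝ) :
    UpperSemicontinuous (sPolar s f) := by
  refine upperSemicontinuous_ciInf (bddBelow_range_sPolar s f) fun x => ?_
  refine (Continuous.div_const ?_ _).upperSemicontinuous
  exact ((continuous_const.sub (innerSL ℝ (x : E)).continuous).max continuous_const).rpow_const
    fun _ => Or.inr hs

section sPolar

variable {s : ℝ} {f : EuclideanSpace ℝ (Fin d) → ℝ}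

theorem sPolar_le {x : E} (hx : 0 < f x) (y : E) :
    sPolar s f y ≤ max (1 - ⟪x, y⟫) 0 ^ s / f x :=
  ciInf_le (bddBelow_range_sPolar s f y) ⟨x, hx⟩

theorem sPolar_le_inv_apply_zero (h0 : 0 < f 0) (y : E) : sPolar s f y ≤ (f 0)⁻¹ := by
  simpa using sPolar_le (s := s) h0 y

theorem sPolar_eq_zero_of_one_le_inner (hs : 0 < s) {x y : E} (hx : 0 < f x)
    (hxy : 1 ≤ ⟪x, y⟫) : sPolar s f y = 0 := by
  refine le_antisymm ?_ (sPolar_nonneg s f y)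
  simpa [max_eq_right (sub_nonpos.2 hxy), Real.zero_rpow hs.ne'] using sPolar_le (s := s) hx y

theorem inner_lt_one_of_sPolar_pos (hs : 0 < s) {x y : E} (hx : 0 < f x)
    (hy : 0 < sPolar s f y) : ⟪x, y⟫ < 1 :=
  not_le.1 fun hxy => hy.ne' (sPolar_eq_zero_of_one_le_inner hs hx hxy)

theorem sPolar_eq_zero_of_ball_subset (hs : 0 < s) {r : ℝ} (hr0 : 0 < r)
    (hr : Metric.ball 0 r ⊆ {x | 0 < f x}) {y : E} (hy : r⁻¹ < ‖y‖) : sPolar s f y = 0 := by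
  have hy0 : 0 < ‖y‖ := (inv_nonneg.2 hr0.le).trans_lt hy
  have hx : (‖y‖ ^ 2)⁻¹ • y ∈ Metric.ball (0 : E) r := by
    rw [mem_ball_zero_iff, norm_smul, norm_inv, norm_pow, norm_norm, sq, mul_inv,
      inv_mul_cancel_right₀ hy0.ne']
    exact (inv_lt_comm₀ hr0 hy0).1 hy
  refine sPolar_eq_zero_of_one_le_inner hs (hr hx) ?_
  rw [real_inner_smul_left, real_inner_self_eq_norm_sq, inv_mul_cancel₀ (by positivity)]

theorem integrable_sPolar (hs : 0 < s) (h0 : (0 : E) ∈ interior {x | 0 < f x}) :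
    Integrable (sPolar s f) := by
  obtain ⟨r, hr, hball⟩ := Metric.mem_nhds_iff.1 (mem_interior_iff_mem_nhds.1 h0)
  refine Integrable.mono' (g := (Metric.closedBall (0 : E) r⁻¹).indicator fun _ => (f 0)⁻¹)
    ((integrable_indicator_iff measurableSet_closedBall).2
      (integrableOn_const measure_closedBall_lt_top.ne))
    (upperSemicontinuous_sPolar hs.le f).measurable.aestronglyMeasurable
    (Filter.Eventually.of_forall fun y => ?_)
  rw [Real.norm_of_nonneg (sPolar_nonneg s f y)]
  by_cases hy : y ∈ Metric.closedBall (0 : E) r⁻¹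
  · rw [indicator_of_mem hy]
    exact sPolar_le_inv_apply_zero (interior_subset (s := {x | 0 < f x}) h0) y
  · rw [indicator_of_notMem hy, sPolar_eq_zero_of_ball_subset hs hr hball]
    simpa using hy

end sPolar

noncomputable def sPolarNeg (s : ℝ) (f : E → ℝ) (y : E) : ℝ :=
  ⨅ x : {x : E // 0 < f x}, max (⟪(x : E), y⟫ - 1) 0 ^ s / f x

theorem sPolarNeg_nonneg (s : ℝ) (f : E → ℝ) (y : E) : 0 ≤ sPolarNeg s f y :=
  Real.iInf_nonneg fun x => div_nonneg (Real.rpow_nonneg (le_max_right _ _) s) x.2.le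

theorem one_lt_inner_of_sPolarNeg_pos {s : ℝ} (hs : 0 < s) {f : E → ℝ} {x y : E} (hx : 0 < f x)
    (hy : 0 < sPolarNeg s f y) : 1 < ⟪x, y⟫ := by
  refine not_le.1 fun hxy => hy.not_ge ?_
  have hbdd : BddBelow (range fun x : {x : E // 0 < f x} => max (⟪(x : E), y⟫ - 1) 0 ^ s / f x) :=
    ⟨0, forall_mem_range.2 fun x => div_nonneg (Real.rpow_nonneg (le_max_right _ _) s) x.2.le⟩
  simpa [sPolarNeg, max_eq_right (sub_nonpos.2 hxy), Real.zero_rpow hs.ne'] using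
    ciInf_le hbdd ⟨x, hx⟩

noncomputable def dualShift (z w : E) : E := (1 - ⟪z, w⟫)⁻¹ • w

theorem one_sub_inner_sub_dualShift {z w : E} (h : ⟪z, w⟫ ≠ 1) (u : E) :
    1 - ⟪u - z, dualShift z w⟫ = (1 - ⟪z, w⟫)⁻¹ * (1 - ⟪u, w⟫) := by
  have hc : 1 - ⟪z, w⟫ ≠ 0 := sub_ne_zero.2 h.symm
  rw [dualShift, real_inner_smul_right, inner_sub_left]
  field_simp
  ring

theorem one_sub_inner_neg_dualShift {z w : E} (h : ⟪z, w⟫ ≠ 1) :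
    1 - ⟪-z, dualShift z w⟫ = (1 - ⟪z, w⟫)⁻¹ := by
  simpa using one_sub_inner_sub_dualShift h 0

theorem dualShift_neg_dualShift {z w : E} (h : ⟪z, w⟫ ≠ 1) :
    dualShift (-z) (dualShift z w) = w := by
  change (1 - ⟪-z, dualShift z w⟫)⁻¹ • dualShift z w = w
  rw [one_sub_inner_neg_dualShift h, dualShift, inv_inv, smul_smul,
    mul_inv_cancel₀ (sub_ne_zero.2 h.symm), one_smul]

theorem inner_neg_dualShift_ne_one {z w : E} (h : ⟪z, w⟫ ≠ 1) : ⟪-z, dualShift z w⟫ ≠ 1 :=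
  fun h' => inv_ne_zero (sub_ne_zero.2 h.symm) <| by
    rw [← one_sub_inner_neg_dualShift h, h', sub_self]

theorem injOn_dualShift (z : E) : InjOn (dualShift z) {w | ⟪z, w⟫ ≠ 1} :=
  fun _ hv _ hw hvw => by
    rw [← dualShift_neg_dualShift hv, hvw, dualShift_neg_dualShift hw]

theorem image_dualShift (z : E) : dualShift z '' {w | ⟪z, w⟫ ≠ 1} = {y | ⟪-z, y⟫ ≠ 1} := by
  refine Subset.antisymm (image_subset_iff.2 fun w => inner_neg_dualShift_ne_one) fun y hy => ?_
  have h := inner_neg_dualShift_ne_one hy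
  rw [neg_neg] at h
  exact ⟨dualShift (-z) y, h, by simpa using dualShift_neg_dualShift hy⟩

theorem hasFDerivAt_dualShift {z w : E} (h : ⟪z, w⟫ ≠ 1) :
    HasFDerivAt (dualShift z) ((1 - ⟪z, w⟫)⁻¹ • (ContinuousLinearMap.id ℝ E +
      ((1 - ⟪z, w⟫)⁻¹ • innerSL ℝ z).smulRight w)) w := by
  have hc : 1 - ⟪z, w⟫ ≠ 0 := sub_ne_zero.2 h.symm
  have h_inner : HasFDerivAt (fun v : E => 1 - ⟪z, v⟫) (-innerSL ℝ z) w :=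
    ((innerSL ℝ z).hasFDerivAt.const_sub 1)
  have h_inv := ((hasDerivAt_inv hc).comp_hasFDerivAt w h_inner).smul (hasFDerivAt_id w)
  refine h_inv.congr_fderiv (ContinuousLinearMap.ext fun v => ?_)
  simp only [add_apply, smul_apply, neg_apply, ContinuousLinearMap.smulRight_apply,
    ContinuousLinearMap.id_apply, innerSL_apply_apply, smul_eq_mul, Function.comp_apply, id]
  generalize 1 - ⟪z, w⟫ = c
  module

theorem det_fderiv_dualShift {z w : E} (h : ⟪z, w⟫ ≠ 1) :
    (fderiv ℝ (dualShift z) w).det = (1 - ⟪z, w⟫)⁻¹ ^ (d + 1) := by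
  have hc : 1 - ⟪z, w⟫ ≠ 0 := sub_ne_zero.2 h.symm
  rw [(hasFDerivAt_dualShift h).fderiv, ContinuousLinearMap.det,
    ContinuousLinearMap.toLinearMap_smul, LinearMap.det_smul, finrank_euclideanSpace_fin,
    ContinuousLinearMap.toLinearMap_add, ContinuousLinearMap.coe_id,
    ContinuousLinearMap.coe_smulRight, LinearMap.det_id_add_smulRight]
  simp only [ContinuousLinearMap.coe_coe, smul_apply, innerSL_apply_apply, smul_eq_mul]
  have ha : ⟪z, w⟫ = 1 - (1 - ⟪z, w⟫) := by ring
  generalize 1 - ⟪z, w⟫ = c at hc ha ⊢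
  rw [ha, pow_succ, mul_sub, mul_one, inv_mul_cancel₀ hc]
  ring

section changeOfVariables

variable {F : Type*} [NormedAddCommGroup F] [NormedSpace ℝ F]

theorem measurableSet_inner_ne_one (z : E) : MeasurableSet {w : E | ⟪z, w⟫ ≠ 1} :=
  (isOpen_ne.preimage (innerSL ℝ z).continuous).measurableSet

theorem ae_inner_ne_one (z : E) : ∀ᵐ y : E, y ∈ {y : E | ⟪z, y⟫ ≠ 1} := by
  simpa [ae_iff] using addHaar_setOf_inner_eq volume z one_ne_zero

theorem hasFDerivWithinAt_dualShift (z : E) :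
    ∀ w ∈ {w : E | ⟪z, w⟫ ≠ 1},
      HasFDerivWithinAt (dualShift z) (fderiv ℝ (dualShift z) w) {w | ⟪z, w⟫ ≠ 1} w :=
  fun _ hw => (hasFDerivAt_dualShift hw).differentiableAt.hasFDerivAt.hasFDerivWithinAt

theorem abs_det_fderiv_dualShift {z w : E} (h : ⟪z, w⟫ ≠ 1) :
    |(fderiv ℝ (dualShift z) w).det| = |1 - ⟪z, w⟫|⁻¹ ^ (d + 1) := by
  rw [det_fderiv_dualShift h, abs_pow, abs_inv]

theorem integral_comp_dualShift (z : E) (g : E → F) :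
    ∫ w in {w | ⟪z, w⟫ ≠ 1}, |1 - ⟪z, w⟫|⁻¹ ^ (d + 1) • g (dualShift z w) = ∫ y, g y := by
  calc ∫ w in {w | ⟪z, w⟫ ≠ 1}, |1 - ⟪z, w⟫|⁻¹ ^ (d + 1) • g (dualShift z w)
      = ∫ w in {w | ⟪z, w⟫ ≠ 1}, |(fderiv ℝ (dualShift z) w).det| • g (dualShift z w) :=
        setIntegral_congr_fun (measurableSet_inner_ne_one z) fun w hw => by
          rw [abs_det_fderiv_dualShift hw]
    _ = ∫ y in {y | ⟪-z, y⟫ ≠ 1}, g y := by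
        rw [← image_dualShift, integral_image_eq_integral_abs_det_fderiv_smul volume
          (measurableSet_inner_ne_one z) (hasFDerivWithinAt_dualShift z) (injOn_dualShift z)]
    _ = ∫ y, g y := by rw [Measure.restrict_eq_self_of_ae_mem (ae_inner_ne_one (-z))]

theorem integrableOn_comp_dualShift_iff (z : E) (g : E → F) :
    IntegrableOn (fun w => |1 - ⟪z, w⟫|⁻¹ ^ (d + 1) • g (dualShift z w)) {w | ⟪z, w⟫ ≠ 1} ↔
      Integrable g := by
  have h_ae : IntegrableOn g {y | ⟪-z, y⟫ ≠ 1} ↔ Integrable g := by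
    rw [IntegrableOn, Measure.restrict_eq_self_of_ae_mem (ae_inner_ne_one (-z))]
  rw [← h_ae, ← image_dualShift, integrableOn_image_iff_integrableOn_abs_det_fderiv_smul volume
      (measurableSet_inner_ne_one z) (hasFDerivWithinAt_dualShift z) (injOn_dualShift z)]
  exact integrableOn_congr_fun (fun w hw => by rw [abs_det_fderiv_dualShift hw])
    (measurableSet_inner_ne_one z)

end changeOfVariables

section shift

variable {s : ℝ} {f : EuclideanSpace ℝ (Fin d) → ℝ} {z w : EuclideanSpace ℝ (Fin d)}

theorem sPolar_shift_dualShift (h : ⟪z, w⟫ ≠ 1) :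
    sPolar s (fun x => f (x + z)) (dualShift z w) =
      ⨅ u : {u : E // 0 < f u}, max ((1 - ⟪z, w⟫)⁻¹ * (1 - ⟪(u : E), w⟫)) 0 ^ s / f u := by
  let e : {u : E // 0 < f u} ≃ {x : E // 0 < f (x + z)} :=
    (Equiv.subRight z).subtypeEquiv fun u => by simp
  rw [sPolar, ← e.iInf_comp]
  refine iInf_congr fun u => ?_
  change max (1 - ⟪(u : E) - z, dualShift z w⟫) 0 ^ s / f ((u : E) - z + z) = _
  rw [sub_add_cancel, one_sub_inner_sub_dualShift h]

theorem sPolar_shift_dualShift_of_inner_lt_one (h : ⟪z, w⟫ < 1) :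
    sPolar s (fun x => f (x + z)) (dualShift z w) = (1 - ⟪z, w⟫)⁻¹ ^ s * sPolar s f w := by
  rw [sPolar_shift_dualShift h.ne, iInf_max_mul_rpow_div (inv_nonneg.2 (sub_pos.2 h).le), sPolar]

theorem sPolar_shift_dualShift_of_one_lt_inner (h : 1 < ⟪z, w⟫) :
    sPolar s (fun x => f (x + z)) (dualShift z w) = (⟪z, w⟫ - 1)⁻¹ ^ s * sPolarNeg s f w := by
  have h_neg (u : E) : (1 - ⟪z, w⟫)⁻¹ * (1 - ⟪u, w⟫) = (⟪z, w⟫ - 1)⁻¹ * (⟪u, w⟫ - 1) := by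
    rw [← neg_sub ⟪z, w⟫, inv_neg, ← neg_sub ⟪u, w⟫, neg_mul_neg]
  simp_rw [sPolar_shift_dualShift h.ne', h_neg]
  rw [iInf_max_mul_rpow_div (inv_nonneg.2 (sub_pos.2 h).le), sPolarNeg]

end shift

noncomputable def sPolarShiftDensity (s : ℝ) (f : E → ℝ) (z w : E) : ℝ :=
  (if 0 < 1 - ⟪z, w⟫ then sPolar s f w * (1 - ⟪z, w⟫)⁻¹ ^ ((d : ℝ) + 1 + s) else 0) +
    if 0 < ⟪z, w⟫ - 1 then sPolarNeg s f w * (⟪z, w⟫ - 1)⁻¹ ^ ((d : ℝ) + 1 + s) else 0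

theorem inv_pow_mul_inv_rpow_mul {t : ℝ} (ht : 0 < t) (n : ℕ) (s L : ℝ) :
    t⁻¹ ^ (n + 1) * (t⁻¹ ^ s * L) = L * t⁻¹ ^ ((n : ℝ) + 1 + s) := by
  rw [Real.rpow_add (inv_pos.2 ht), ← Nat.cast_add_one, Real.rpow_natCast]
  ring

section density

variable {s : ℝ} {f : EuclideanSpace ℝ (Fin d) → ℝ} {z : EuclideanSpace ℝ (Fin d)}

theorem abs_inv_pow_smul_sPolar_shift_dualShift {w : E} (h : ⟪z, w⟫ ≠ 1) :
    |1 - ⟪z, w⟫|⁻¹ ^ (d + 1) • sPolar s (fun x => f (x + z)) (dualShift z w) =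
      sPolarShiftDensity s f z w := by
  rw [smul_eq_mul, sPolarShiftDensity]
  rcases h.lt_or_gt with h | h
  · have hc : 0 < 1 - ⟪z, w⟫ := sub_pos.2 h
    rw [abs_of_pos hc, sPolar_shift_dualShift_of_inner_lt_one h, if_pos hc,
      if_neg (by linarith), add_zero, inv_pow_mul_inv_rpow_mul hc]
  · have hc : 0 < ⟪z, w⟫ - 1 := sub_pos.2 h
    rw [abs_of_neg (by linarith), neg_sub, sPolar_shift_dualShift_of_one_lt_inner h,
      if_neg (by linarith), if_pos hc, zero_add, inv_pow_mul_inv_rpow_mul hc]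

theorem sPolarShiftDensity_of_inner_eq_one {w : E} (h : ⟪z, w⟫ = 1) :
    sPolarShiftDensity s f z w = 0 := by
  simp [sPolarShiftDensity, h]

theorem integral_sPolarShiftDensity (s : ℝ) (f : E → ℝ) (z : E) :
    ∫ w, sPolarShiftDensity s f z w = ∫ y, sPolar s (fun x => f (x + z)) y := by
  rw [← integral_comp_dualShift z fun y => sPolar s (fun x => f (x + z)) y,
    ← setIntegral_eq_integral_of_forall_compl_eq_zero
      fun w hw => sPolarShiftDensity_of_inner_eq_one (not_not.1 hw)]
  exact setIntegral_congr_fun (measurableSet_inner_ne_one z) fun w hw =>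
    (abs_inv_pow_smul_sPolar_shift_dualShift hw).symm

theorem integrable_sPolarShiftDensity (hs : 0 < s) (hz : z ∈ interior {x | 0 < f x}) :
    Integrable (sPolarShiftDensity s f z) := by
  have h0 : (0 : E) ∈ interior {x | 0 < f (x + z)} :=
    preimage_interior_subset_interior_preimage (continuous_add_const z)
      (show (0 : E) + z ∈ interior {x | 0 < f x} by rwa [zero_add])
  have h_on : IntegrableOn (sPolarShiftDensity s f z) {w | ⟪z, w⟫ ≠ 1} :=
    ((integrableOn_comp_dualShift_iff z _).2 (integrable_sPolar hs h0)).congr_fun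
      (fun w hw => abs_inv_pow_smul_sPolar_shift_dualShift hw) (measurableSet_inner_ne_one z)
  exact h_on.integrable_of_forall_notMem_eq_zero fun w hw =>
    sPolarShiftDensity_of_inner_eq_one (not_not.1 hw)

theorem convexOn_sPolarShiftDensity (hs : 0 < s) {D : Set E} (hD : Convex ℝ D)
    (hDf : ∀ z ∈ D, 0 < f z) (w : E) : ConvexOn ℝ D fun z => sPolarShiftDensity s f z w := by
  have hp : 1 ≤ (d : ℝ) + 1 + s := by linarith [d.cast_nonneg (α := ℝ)]
  let ℓ : E →ᵃ[ℝ] ℝ := (innerSL ℝ w).toLinearMap.toAffineMap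
  have hℓ (z : E) : ℓ z = ⟪z, w⟫ := real_inner_comm z w
  have h_lt := convexOn_ite_mul_inv_rpow hD (AffineMap.const ℝ E 1 - ℓ) (sPolar_nonneg s f w) hp
    fun hK z hz => by simpa [hℓ] using inner_lt_one_of_sPolar_pos hs (hDf z hz) hK
  have h_gt := convexOn_ite_mul_inv_rpow hD (ℓ - AffineMap.const ℝ E 1) (sPolarNeg_nonneg s f w)
    hp fun hK z hz => by simpa [hℓ] using one_lt_inner_of_sPolarNeg_pos hs (hDf z hz) hK
  exact (h_lt.add h_gt).congr fun z _ => by simp [sPolarShiftDensity, hℓ]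

end density

theorem convex_setOf_pos_of_concaveOn_rpow {V : Type*} [AddCommGroup V] [Module ℝ V] {s : ℝ}
    (hs : 0 < s) {f : V → ℝ} (hf : ∀ x, 0 ≤ f x)
    (hconc : ∀ x y : V, 0 < f x → 0 < f y → ∀ t ∈ Set.Icc (0 : ℝ) 1,
      (1 - t) * f x ^ (1 / s) + t * f y ^ (1 / s) ≤ f ((1 - t) • x + t • y) ^ (1 / s)) :
    Convex ℝ {x | 0 < f x} := by
  intro x hx y hy a b ha hb hab
  obtain rfl : a = 1 - b := by linarith
  have h_comb : 0 < (1 - b) * f x ^ (1 / s) + b * f y ^ (1 / s) :=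
    convex_Ioi (0 : ℝ) (Real.rpow_pos_of_pos hx _) (Real.rpow_pos_of_pos hy _) ha hb hab
  have h_pos := h_comb.trans_le (hconc x y hx hy b ⟨hb, by linarith⟩)
  refine (hf _).lt_of_ne fun h0 => h_pos.ne' ?_
  rw [← h0, Real.zero_rpow (one_div_ne_zero hs.ne')]

theorem convexOn_integral_sPolar_shift_general (d : ℕ) (s : ℝ) (hs : 0 < s)
    (f : EuclideanSpace ℝ (Fin d) → ℝ) (hf : ∀ x, 0 ≤ f x)
    (hconc : ∀ x y : EuclideanSpace ℝ (Fin d), 0 < f x → 0 < f y →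
      ∀ t ∈ Set.Icc (0 : ℝ) 1,
        (1 - t) * f x ^ (1 / s) + t * f y ^ (1 / s) ≤ f ((1 - t) • x + t • y) ^ (1 / s)) :
    ConvexOn ℝ (interior (Function.support f))
      (fun z => ∫ y, sPolar s (fun x => f (x + z)) y) := by
  have h_supp : Function.support f = {x | 0 < f x} := by
    ext x
    exact (hf x).lt_iff_ne'.symm
  rw [h_supp]
  have hD := (convex_setOf_pos_of_concaveOn_rpow hs hf hconc).interior
  have h_pos : ∀ z ∈ interior {x | 0 < f x}, 0 < f z :=
    fun _ hz => interior_subset (s := {x | 0 < f x}) hz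
  exact (convexOn_integral hD (convexOn_sPolarShiftDensity hs hD h_pos)
    fun z hz => integrable_sPolarShiftDensity hs hz).congr fun z _ =>
      integral_sPolarShiftDensity s f z

/-- For an upper semi-continuous `1/s`-concave function `f` of finite integral, the
function `z ↦ ∫ L_s (f(·+z))` is convex on the interior of the support of `f`. -/
theorem convexOn_integral_sPolar_shift (d : ℕ) (s : ℝ) (hs : 0 < s)
    (f : EuclideanSpace ℝ (Fin d) → ℝ) (hf : ∀ x, 0 ≤ f x)
    (husc : UpperSemicontinuous f)
    (hconc : ∀ x y : EuclideanSpace ℝ (Fin d), 0 < f x → 0 < f y →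
      ∀ t ∈ Set.Icc (0 : ℝ) 1,
        (1 - t) * f x ^ (1 / s) + t * f y ^ (1 / s) ≤ f ((1 - t) • x + t • y) ^ (1 / s))
    (hint : Integrable f) :
    ConvexOn ℝ (interior (Function.support f))
      (fun z => ∫ y, sPolar s (fun x => f (x + z)) y) :=
  convexOn_integral_sPolar_shift_general d s hs f hf hconc
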